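/- arXiv:1610.03344 — 4 statements merged into one kernel-verified Lean document; each statement's English description precedes it below -/
import Mathlib

section
/- Let Ω̄ be a real symmetric positive definite n×n matrix and Δ₁,…,Δ_N real symmetric positive semidefinite n×n matrices. Then the set function f_det(S) = log det(Ω̄ + ∑_{ℓ∈S} Δ_ℓ) is submodular: for all A ⊆ B ⊆ {1,…,N} and e ∉ B, f_det(A ∪ {e}) − f_det(A) ≥ f_det(B ∪ {e}) − f_det(B). -/
/-!
Write `D = Cᴴ C`. By the matrix determinant lemma,
`log det (M + D) - log det M = log det (1 + C M⁻¹ Cᴴ)`, so the marginal gain of adding `D`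
to `M` depends on `M` only through `M⁻¹`. Inversion is antitone in the Loewner order and
`det` is monotone on positive definite matrices, hence the marginal gain decreases as `M` grows;
submodularity is the case `M = Ω̄ + ∑_{ℓ∈A} Δ_ℓ ≤ Ω̄ + ∑_{ℓ∈B} Δ_ℓ`, `D = Δ_e`.
-/

open Matrix

open scoped MatrixOrder ComplexOrder

namespace Matrix

variable {m : Type*} [Fintype m] [DecidableEq m]

/-- Schur complements of the block matrix `[[B, 1], [1, A⁻¹]]` in both corners. -/
theorem PosDef.inv_le_inv_of_le {𝕜 : Type*} [RCLike 𝕜] {A B : Matrix m m 𝕜} (hA : A.PosDef)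
    (hAB : A ≤ B) : B⁻¹ ≤ A⁻¹ := by
  have hB : B.PosDef := add_sub_cancel A B ▸ hA.add_posSemidef hAB
  have := hA.isUnit.invertible
  have := hB.isUnit.invertible
  have hblock : (fromBlocks B 1 (1 : Matrix m m 𝕜)ᴴ A⁻¹).PosSemidef := by
    rw [PosDef.fromBlocks₂₂ _ _ hA.inv]
    simpa [le_iff] using hAB
  rw [PosDef.fromBlocks₁₁ _ _ hB] at hblock
  simpa [le_iff] using hblock

/-- Every eigenvalue of `1 + F` is `vᵀ (1 + F) v = 1 + vᵀ F v ≥ 1` for a unit eigenvector `v`. -/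
theorem one_le_det_one_add {F : Matrix m m ℝ} (hF : F.PosSemidef) : 1 ≤ (1 + F).det := by
  have h1F : (1 + F).IsHermitian := isHermitian_one.add hF.1
  rw [h1F.det_eq_prod_eigenvalues]
  refine Finset.one_le_prod fun i _ => ?_
  rw [h1F.eigenvalues_eq]
  obtain ⟨v, hv⟩ : ∃ v, v = h1F.eigenvectorBasis i := ⟨_, rfl⟩
  have hunit : v.ofLp ⬝ᵥ v.ofLp = 1 := by
    have hnorm := h1F.eigenvectorBasis.orthonormal.1 i
    rw [← hv] at hnorm
    have := real_inner_self_eq_norm_sq v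
    rw [hnorm, EuclideanSpace.inner_eq_star_dotProduct] at this
    simpa using this
  rw [← hv]
  simpa [add_mulVec, dotProduct_add, hunit] using hF.dotProduct_mulVec_nonneg v.ofLp

theorem PosDef.det_le_det_of_le {A B : Matrix m m ℝ} (hA : A.PosDef) (hAB : A ≤ B) :
    A.det ≤ B.det := by
  obtain ⟨C, hC⟩ := CStarAlgebra.nonneg_iff_eq_star_mul_self.mp (sub_nonneg.mpr hAB)
  have hB : B = A + Cᴴ * C := by rw [← star_eq_conjTranspose, ← hC, add_sub_cancel]
  rw [hB, det_add_mul _ _ hA.det_pos.ne'.isUnit]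
  exact le_mul_of_one_le_right hA.det_pos.le
    (one_le_det_one_add (hA.inv.posSemidef.mul_mul_conjTranspose_same C))

theorem PosDef.log_det_add_sub_log_det {A : Matrix m m ℝ} (hA : A.PosDef) (C : Matrix m m ℝ) :
    Real.log (A + Cᴴ * C).det - Real.log A.det = Real.log (1 + C * A⁻¹ * Cᴴ).det := by
  have hpos : 0 < (1 + C * A⁻¹ * Cᴴ).det :=
    (PosDef.one.add_posSemidef (hA.inv.posSemidef.mul_mul_conjTranspose_same C)).det_pos
  rw [det_add_mul _ _ hA.det_pos.ne'.isUnit, Real.log_mul hA.det_pos.ne' hpos.ne',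
    add_sub_cancel_left]

theorem PosDef.log_det_add_sub_log_det_le {A B D : Matrix m m ℝ} (hA : A.PosDef) (hAB : A ≤ B)
    (hD : D.PosSemidef) :
    Real.log (B + D).det - Real.log B.det ≤ Real.log (A + D).det - Real.log A.det := by
  have hB : B.PosDef := add_sub_cancel A B ▸ hA.add_posSemidef hAB
  obtain ⟨C, rfl⟩ := CStarAlgebra.nonneg_iff_eq_star_mul_self.mp hD.nonneg
  rw [star_eq_conjTranspose, hA.log_det_add_sub_log_det, hB.log_det_add_sub_log_det]
  have hBC : (1 + C * B⁻¹ * Cᴴ).PosDef :=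
    PosDef.one.add_posSemidef (hB.inv.posSemidef.mul_mul_conjTranspose_same C)
  refine Real.log_le_log hBC.det_pos (hBC.det_le_det_of_le ?_)
  gcongr
  exact star_right_conjugate_le_conjugate (hA.inv_le_inv_of_le hAB) C

end Matrix

/-- Submodularity of the log-determinant set function: for `Ω̄ ≻ 0` and `Δ_ℓ ⪰ 0`, the
set function `f(S) = log det (Ω̄ + ∑_{ℓ∈S} Δ_ℓ)` satisfies the diminishing-returns property. -/
theorem logdet_submodular {n N : ℕ}
    (Ω : Matrix (Fin n) (Fin n) ℝ) (hΩ : Ω.PosDef)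
    (Δ : Fin N → Matrix (Fin n) (Fin n) ℝ) (hΔ : ∀ ℓ, (Δ ℓ).PosSemidef)
    (A B : Finset (Fin N)) (hAB : A ⊆ B) (e : Fin N) (he : e ∉ B) :
    Real.log (Ω + ∑ ℓ ∈ insert e B, Δ ℓ).det - Real.log (Ω + ∑ ℓ ∈ B, Δ ℓ).det ≤
      Real.log (Ω + ∑ ℓ ∈ insert e A, Δ ℓ).det - Real.log (Ω + ∑ ℓ ∈ A, Δ ℓ).det := by
  have hA : (Ω + ∑ ℓ ∈ A, Δ ℓ).PosDef :=
    hΩ.add_posSemidef (posSemidef_sum A fun ℓ _ => hΔ ℓ)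
  have hsum : ∑ ℓ ∈ A, Δ ℓ ≤ ∑ ℓ ∈ B, Δ ℓ :=
    Finset.sum_le_sum_of_subset_of_nonneg hAB fun ℓ _ _ => (hΔ ℓ).nonneg
  have hinsert (S : Finset (Fin N)) (heS : e ∉ S) :
      Ω + ∑ ℓ ∈ insert e S, Δ ℓ = Ω + ∑ ℓ ∈ S, Δ ℓ + Δ e := by
    rw [Finset.sum_insert heS]
    abel
  rw [hinsert B he, hinsert A fun h => he (hAB h)]
  exact hA.log_det_add_sub_log_det_le (add_le_add_right hsum Ω) (hΔ e)
end

section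
/- Let f : 2^F → ℝ be a normalized (f(∅)=0), monotone, submodular set function on a finite ground set F, and let κ ≥ 1. Let S^# be the set produced by the greedy algorithm that, starting from the empty set, for κ iterations adds the element with maximal marginal gain. Then f(S^#) ≥ (1 − 1/e) · max{f(S) : S ⊆ F, |S| ≤ κ}. -/
open BigOperators

/-- Nemhauser–Wolsey–Fisher guarantee: for a normalized, monotone, submodular set function `f`
on a finite ground set, the greedy algorithm with `κ` iterations achieves at least a
`(1 − 1/e)` fraction of the optimal value over sets of cardinality at most `κ`. -/
theorem greedy_submodular_guarantee {α : Type*} [Fintype α] [DecidableEq α]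
    (f : Finset α → ℝ) (κ : ℕ) (hκ : 1 ≤ κ)
    (hnorm : f ∅ = 0)
    (hmono : ∀ A B : Finset α, A ⊆ B → f A ≤ f B)
    (hsub : ∀ A B : Finset α, A ⊆ B → ∀ e ∉ B,
      f (insert e B) - f B ≤ f (insert e A) - f A)
    (S : ℕ → Finset α) (hS0 : S 0 = ∅)
    (hstep : ∀ i < κ, ∃ g, g ∉ S i ∧ S (i + 1) = insert g (S i) ∧
      ∀ e, f (insert e (S i)) ≤ f (insert g (S i))) :
    ∀ T : Finset α, T.card ≤ κ → (1 - 1 / Real.exp 1) * f T ≤ f (S κ) := by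
  intro T hT
  -- telescoping submodularity bound
  have key : ∀ (B A : Finset α), f (A ∪ B) ≤ f A + ∑ e ∈ B, (f (insert e A) - f A) := by
    intro B
    induction B using Finset.induction_on with
    | empty => intro A; simp
    | @insert x B' hx ih =>
      intro A
      rw [Finset.sum_insert hx]
      have h1 : A ∪ insert x B' = insert x (A ∪ B') := by
        rw [Finset.union_insert]
      have h2 : f (insert x (A ∪ B')) - f (A ∪ B') ≤ f (insert x A) - f A := by
        by_cases hxA : x ∈ A ∪ B'
        · rw [Finset.insert_eq_self.mpr hxA]
          have := hmono A (insert x A) (Finset.subset_insert x A)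
          linarith
        · exact hsub A (A ∪ B') Finset.subset_union_left x hxA
      have h3 := ih A
      rw [h1]
      linarith
  have hTf : 0 ≤ f T := by
    have := hmono ∅ T (Finset.empty_subset T)
    linarith
  have hκR : (1:ℝ) ≤ (κ:ℝ) := by exact_mod_cast hκ
  have hκ0 : (0:ℝ) < (κ:ℝ) := by linarith
  have step : ∀ i < κ, f T - f (S (i+1)) ≤ (1 - 1/(κ:ℝ)) * (f T - f (S i)) := by
    intro i hi
    obtain ⟨g, hg, hSi1, hgmax⟩ := hstep i hi
    have hgain : 0 ≤ f (S (i+1)) - f (S i) := by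
      rw [hSi1]
      have := hmono (S i) (insert g (S i)) (Finset.subset_insert _ _)
      linarith
    have h1 : f T ≤ f (S i ∪ T) := hmono T _ Finset.subset_union_right
    have h2 := key T (S i)
    have h3 : ∑ e ∈ T, (f (insert e (S i)) - f (S i)) ≤ ∑ e ∈ T, (f (S (i+1)) - f (S i)) := by
      apply Finset.sum_le_sum
      intro e _
      have := hgmax e
      rw [hSi1]
      linarith
    rw [Finset.sum_const, nsmul_eq_mul] at h3
    have hTcard : (T.card : ℝ) ≤ (κ:ℝ) := by exact_mod_cast hT
    have h4 : (T.card : ℝ) * (f (S (i+1)) - f (S i)) ≤ (κ:ℝ) * (f (S (i+1)) - f (S i)) :=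
      mul_le_mul_of_nonneg_right hTcard hgain
    have h5 : f T - f (S i) ≤ (κ:ℝ) * (f (S (i+1)) - f (S i)) := by linarith
    have h6 : (f T - f (S i))/(κ:ℝ) ≤ f (S (i+1)) - f (S i) := by
      rw [div_le_iff₀ hκ0]
      nlinarith
    have h7 : (1 - 1/(κ:ℝ)) * (f T - f (S i))
        = (f T - f (S i)) - (f T - f (S i))/(κ:ℝ) := by
      field_simp
    linarith
  have hq0 : 0 ≤ 1 - 1/(κ:ℝ) := by
    have : 1/(κ:ℝ) ≤ 1 := by
      rw [div_le_one hκ0]; exact hκR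
    linarith
  have iter : ∀ i ≤ κ, f T - f (S i) ≤ (1 - 1/(κ:ℝ))^i * f T := by
    intro i
    induction i with
    | zero => intro _; simp [hS0, hnorm]
    | succ n ih =>
      intro hn
      have h1 := step n (by omega)
      have h2 := ih (by omega)
      calc f T - f (S (n+1)) ≤ (1 - 1/(κ:ℝ)) * (f T - f (S n)) := h1
        _ ≤ (1 - 1/(κ:ℝ)) * ((1 - 1/(κ:ℝ))^n * f T) := by
            exact mul_le_mul_of_nonneg_left h2 hq0
        _ = (1 - 1/(κ:ℝ))^(n+1) * f T := by ring
  have hfin := iter κ le_rfl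
  have hexp : (1 - 1/(κ:ℝ))^κ ≤ 1 / Real.exp 1 := by
    have h1 : 1 - 1/(κ:ℝ) ≤ Real.exp (-(1/(κ:ℝ))) := by
      have := Real.add_one_le_exp (-(1/(κ:ℝ)))
      linarith
    have h2 : (1 - 1/(κ:ℝ))^κ ≤ (Real.exp (-(1/(κ:ℝ))))^κ :=
      pow_le_pow_left₀ hq0 h1 κ
    have h3 : (Real.exp (-(1/(κ:ℝ))))^κ = Real.exp ((κ:ℝ) * (-(1/(κ:ℝ)))) := by
      rw [← Real.exp_nat_mul]
    have h4 : (κ:ℝ) * (-(1/(κ:ℝ))) = -1 := by field_simp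
    rw [h3, h4, Real.exp_neg] at h2
    simpa [one_div] using h2
  have hmul : (1 - 1/(κ:ℝ))^κ * f T ≤ (1 / Real.exp 1) * f T :=
    mul_le_mul_of_nonneg_right hexp hTf
  nlinarith
end

section
/- Let f : 2^F → ℝ be a monotone submodular (not necessarily normalized) set function, S* an optimal solution of max{f(S) : |S| ≤ κ}, and S^# the greedy solution with κ iterations. Then f(S^#) ≥ (1 − 1/e) f(S*) + f(∅)/e. -/
open BigOperators

/-- Greedy guarantee for a monotone submodular (not necessarily normalized) set function:
if `S*` is an optimal solution of `max {f(S) : |S| ≤ κ}` and `S^#` is the greedy solution,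
then `f(S^#) ≥ (1 − 1/e) f(S*) + f(∅)/e`. -/
theorem greedy_submodular_guarantee_unnormalized {α : Type*} [Fintype α] [DecidableEq α]
    (f : Finset α → ℝ) (κ : ℕ) (hκ : 1 ≤ κ)
    (hmono : ∀ A B : Finset α, A ⊆ B → f A ≤ f B)
    (hsub : ∀ A B : Finset α, A ⊆ B → ∀ e ∉ B,
      f (insert e B) - f B ≤ f (insert e A) - f A)
    (S : ℕ → Finset α) (hS0 : S 0 = ∅)
    (hstep : ∀ i < κ, ∃ g, g ∉ S i ∧ S (i + 1) = insert g (S i) ∧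
      ∀ e, f (insert e (S i)) ≤ f (insert g (S i)))
    (T : Finset α) (hT : T.card ≤ κ)
    (hTopt : ∀ S' : Finset α, S'.card ≤ κ → f S' ≤ f T) :
    (1 - 1 / Real.exp 1) * f T + f ∅ / Real.exp 1 ≤ f (S κ) := by
  have hκR : (1:ℝ) ≤ (κ:ℝ) := by exact_mod_cast hκ
  have hκpos : (0:ℝ) < (κ:ℝ) := by linarith
  have hc0 : (0:ℝ) ≤ 1 - 1/(κ:ℝ) := by
    have : 1/(κ:ℝ) ≤ 1 := by rw [div_le_one hκpos]; linarith
    linarith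
  -- submodular sum bound
  have key : ∀ (B D : Finset α), f (B ∪ D) ≤ f B + ∑ e ∈ D, (f (insert e B) - f B) := by
    intro B D
    induction D using Finset.induction_on with
    | empty => simp
    | @insert a D' ha ih =>
      rw [Finset.sum_insert ha, Finset.union_insert]
      by_cases hmem : a ∈ B ∪ D'
      · rw [Finset.insert_eq_self.mpr hmem]
        have ht : 0 ≤ f (insert a B) - f B := by
          have := hmono B (insert a B) (Finset.subset_insert _ _); linarith
        linarith
      · have h2 := hsub B (B ∪ D') Finset.subset_union_left a hmem
        linarith
  -- per-step bound
  have step : ∀ i < κ, f T - f (S i) ≤ (κ:ℝ) * (f (S (i+1)) - f (S i)) := by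
    intro i hi
    obtain ⟨g, hg, hSi, hmax⟩ := hstep i hi
    have h1 : f T ≤ f (S i ∪ T) := hmono T _ Finset.subset_union_right
    have h2 := key (S i) T
    have h3 : ∑ e ∈ T, (f (insert e (S i)) - f (S i))
        ≤ ∑ e ∈ T, (f (S (i+1)) - f (S i)) := by
      apply Finset.sum_le_sum
      intro e _
      have := hmax e
      rw [hSi]; linarith
    have h4 : ∑ e ∈ T, (f (S (i+1)) - f (S i))
        = (T.card : ℝ) * (f (S (i+1)) - f (S i)) := by
      rw [Finset.sum_const, nsmul_eq_mul]
    have hgain : 0 ≤ f (S (i+1)) - f (S i) := by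
      rw [hSi]
      have := hmono (S i) (insert g (S i)) (Finset.subset_insert _ _); linarith
    have hcard : (T.card : ℝ) ≤ (κ:ℝ) := by exact_mod_cast hT
    have h5 : (T.card : ℝ) * (f (S (i+1)) - f (S i)) ≤ (κ:ℝ) * (f (S (i+1)) - f (S i)) :=
      mul_le_mul_of_nonneg_right hcard hgain
    linarith
  -- geometric decay
  have main : ∀ i ≤ κ, f T - f (S i) ≤ (1 - 1/(κ:ℝ))^i * (f T - f ∅) := by
    intro i hiκ
    induction i with
    | zero => simp [hS0]
    | succ i ih =>
      have hi' : i < κ := hiκ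
      have ih' := ih (le_of_lt hi')
      have hst := step i hi'
      have h6 : (f T - f (S i))/(κ:ℝ) ≤ f (S (i+1)) - f (S i) := by
        rw [div_le_iff₀ hκpos]; linarith [hst]
      have hid : (1 - 1/(κ:ℝ)) * (f T - f (S i))
          = (f T - f (S i)) - (f T - f (S i))/(κ:ℝ) := by ring
      have h7 : f T - f (S (i+1)) ≤ (1 - 1/(κ:ℝ)) * (f T - f (S i)) := by
        rw [hid]; linarith
      calc f T - f (S (i+1)) ≤ (1 - 1/(κ:ℝ)) * (f T - f (S i)) := h7
        _ ≤ (1 - 1/(κ:ℝ)) * ((1 - 1/(κ:ℝ))^i * (f T - f ∅)) :=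
            mul_le_mul_of_nonneg_left ih' hc0
        _ = (1 - 1/(κ:ℝ))^(i+1) * (f T - f ∅) := by ring
  have hδ0 : 0 ≤ f T - f ∅ := by
    have := hmono ∅ T (Finset.empty_subset T); linarith
  have hpow : (1 - 1/(κ:ℝ))^κ ≤ 1 / Real.exp 1 := by
    have h8 : 1 - 1/(κ:ℝ) ≤ Real.exp (-(1/(κ:ℝ))) := by
      have := Real.add_one_le_exp (-(1/(κ:ℝ))); linarith
    have h9 : (1 - 1/(κ:ℝ))^κ ≤ (Real.exp (-(1/(κ:ℝ))))^κ :=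
      pow_le_pow_left₀ hc0 h8 κ
    have h10 : (Real.exp (-(1/(κ:ℝ))))^κ = Real.exp ((κ:ℝ) * (-(1/(κ:ℝ)))) :=
      (Real.exp_nat_mul _ κ).symm
    have h11 : (κ:ℝ) * (-(1/(κ:ℝ))) = -1 := by
      field_simp
    rw [h10, h11, Real.exp_neg] at h9
    rw [← one_div] at h9
    exact h9
  have hfin := main κ le_rfl
  have h12 : (1 - 1/(κ:ℝ))^κ * (f T - f ∅) ≤ (1 / Real.exp 1) * (f T - f ∅) :=
    mul_le_mul_of_nonneg_right hpow hδ0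
  have hid2 : (1 - 1 / Real.exp 1) * f T + f ∅ / Real.exp 1
      = f T - (1 / Real.exp 1) * (f T - f ∅) := by ring
  linarith [hfin, h12]
end

section
/- Let f : 2^F → ℝ be a nonnegative monotone set function with submodularity ratio γ ∈ (0,1] with respect to the greedy solution S^# of cardinality κ, i.e., for every L ⊆ S^# and every E with |E| ≤ κ and E ∩ L = ∅, ∑_{e∈E}(f(L∪{e})−f(L)) ≥ γ (f(L∪E)−f(L)). Then the greedy algorithm satisfies f(S^#) ≥ (1 − e^{−γ}) f(S*), where S* is an optimal solution of max{f(S) : |S| ≤ κ}. -/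
/-!
Fix `T` with `|T| ≤ κ`. At a greedy step from `L`, the submodularity ratio
applied to `E = T \ L` gives `γ (f T - f L) ≤ ∑_{e ∈ E} (f (L ∪ {e}) - f L)`, and each of the at
most `κ` summands is at most the greedy gain. Hence the gap `f T - f (S i)` shrinks by a factor
`1 - γ / κ` at each of the `κ` steps, and `(1 - γ / κ) ^ κ ≤ e^{-γ}`.
-/

open Finset

theorem Nat.apply_le_of_forall_lt_le_succ {β : Type*} [Preorder β] {u : ℕ → β} {n : ℕ}
    (h : ∀ i < n, u i ≤ u (i + 1)) {i : ℕ} (hi : i ≤ n) : u i ≤ u n :=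
  Nat.decreasingInduction (motive := fun i _ => u i ≤ u n) (fun k hk ih => (h k hk).trans ih)
    le_rfl hi

section Greedy

variable {α : Type*} [DecidableEq α] {f : Finset α → ℝ}

theorem sum_marginal_le_mul_greedy_gain (hf : Monotone f) {L E : Finset α} {g : α} {κ : ℕ}
    (hE : E.card ≤ κ) (hg : ∀ e, f (insert e L) ≤ f (insert g L)) :
    ∑ e ∈ E, (f (insert e L) - f L) ≤ κ * (f (insert g L) - f L) := by
  have hgain : 0 ≤ f (insert g L) - f L := sub_nonneg.2 (hf (subset_insert g L))
  calc ∑ e ∈ E, (f (insert e L) - f L)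
      ≤ ∑ _e ∈ E, (f (insert g L) - f L) := sum_le_sum fun e _ => sub_le_sub_right (hg e) _
    _ = E.card * (f (insert g L) - f L) := by rw [sum_const, nsmul_eq_mul]
    _ ≤ κ * (f (insert g L) - f L) := by gcongr

theorem gap_greedy_insert_le (hf : Monotone f) {γ : ℝ} (hγ : 0 ≤ γ) {κ : ℕ} (hκ : 0 < κ)
    {L T : Finset α} {g : α} (hT : T.card ≤ κ) (hg : ∀ e, f (insert e L) ≤ f (insert g L))
    (hratio : γ * (f (L ∪ T \ L) - f L) ≤ ∑ e ∈ T \ L, (f (insert e L) - f L)) :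
    f T - f (insert g L) ≤ (1 - γ / κ) * (f T - f L) := by
  have hκ' : (0 : ℝ) < κ := by exact_mod_cast hκ
  have hcover : f T ≤ f (L ∪ T \ L) := hf (by simp)
  have hsum := sum_marginal_le_mul_greedy_gain hf (E := T \ L)
    ((card_le_card sdiff_subset).trans hT) hg
  have hgain : γ * (f T - f L) ≤ κ * (f (insert g L) - f L) := by
    calc γ * (f T - f L) ≤ γ * (f (L ∪ T \ L) - f L) := by gcongr
      _ ≤ κ * (f (insert g L) - f L) := hratio.trans hsum
  have hscaled : γ / κ * (f T - f L) ≤ f (insert g L) - f L := by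
    rw [div_mul_eq_mul_div, div_le_iff₀ hκ']
    linarith
  linarith

end Greedy

theorem greedy_approx_submodular_guarantee_general {α : Type*} [DecidableEq α]
    (f : Finset α → ℝ) (κ : ℕ) (hκ : 1 ≤ κ)
    (hnorm : f ∅ = 0)
    (hmono : ∀ A B : Finset α, A ⊆ B → f A ≤ f B)
    (S : ℕ → Finset α) (hS0 : S 0 = ∅)
    (hstep : ∀ i < κ, ∃ g, g ∉ S i ∧ S (i + 1) = insert g (S i) ∧
      ∀ e, f (insert e (S i)) ≤ f (insert g (S i)))
    (γ : ℝ) (hγ0 : 0 < γ) (hγ1 : γ ≤ 1)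
    (hratio : ∀ L : Finset α, L ⊆ S κ → ∀ E : Finset α, E.card ≤ κ → Disjoint E L →
      γ * (f (L ∪ E) - f L) ≤ ∑ e ∈ E, (f (insert e L) - f L))
    (T : Finset α) (hT : T.card ≤ κ) :
    (1 - Real.exp (-γ)) * f T ≤ f (S κ) := by
  have hf : Monotone f := fun A B h => hmono A B h
  have hγκ : γ ≤ κ := hγ1.trans (by exact_mod_cast hκ)
  have hchain : ∀ i < κ, S i ⊆ S (i + 1) := fun i hi => by
    obtain ⟨g, -, hSi, -⟩ := hstep i hi
    exact hSi ▸ subset_insert g (S i)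
  have hdecay : ∀ i < κ, f T - f (S (i + 1)) ≤ (1 - γ / κ) * (f T - f (S i)) := by
    intro i hi
    obtain ⟨g, -, hSi, hg⟩ := hstep i hi
    rw [hSi]
    exact gap_greedy_insert_le hf hγ0.le hκ hT hg
      (hratio _ (Nat.apply_le_of_forall_lt_le_succ hchain hi.le) _
        ((card_le_card sdiff_subset).trans hT) sdiff_disjoint)
  have hgeom := le_geom (u := fun i => f T - f (S i))
    (sub_nonneg.2 (div_le_one_of_le₀ hγκ (Nat.cast_nonneg κ))) κ hdecay
  have hexp : (1 - γ / κ) ^ κ ≤ Real.exp (-γ) := Real.one_sub_div_pow_le_exp_neg hγκ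
  have hfT : 0 ≤ f T := hnorm ▸ hf (empty_subset T)
  simp only [hS0, hnorm, sub_zero] at hgeom
  linarith [mul_le_mul_of_nonneg_right hexp hfT]

/-- Approximate submodular maximization (Das–Kempe): for a nonnegative monotone set function
with submodularity ratio `γ` with respect to the greedy solution `S^#` of cardinality `κ`,
the greedy algorithm satisfies `f(S^#) ≥ (1 − e^{−γ}) f(S*)`. -/
theorem greedy_approx_submodular_guarantee {α : Type*} [Fintype α] [DecidableEq α]
    (f : Finset α → ℝ) (κ : ℕ) (hκ : 1 ≤ κ)
    (hnn : ∀ A : Finset α, 0 ≤ f A) (hnorm : f ∅ = 0)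
    (hmono : ∀ A B : Finset α, A ⊆ B → f A ≤ f B)
    (S : ℕ → Finset α) (hS0 : S 0 = ∅)
    (hstep : ∀ i < κ, ∃ g, g ∉ S i ∧ S (i + 1) = insert g (S i) ∧
      ∀ e, f (insert e (S i)) ≤ f (insert g (S i)))
    (γ : ℝ) (hγ0 : 0 < γ) (hγ1 : γ ≤ 1)
    (hratio : ∀ L : Finset α, L ⊆ S κ → ∀ E : Finset α, E.card ≤ κ → Disjoint E L →
      γ * (f (L ∪ E) - f L) ≤ ∑ e ∈ E, (f (insert e L) - f L))
    (T : Finset α) (hT : T.card ≤ κ)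
    (hTopt : ∀ S' : Finset α, S'.card ≤ κ → f S' ≤ f T) :
    (1 - Real.exp (-γ)) * f T ≤ f (S κ) :=
  greedy_approx_submodular_guarantee_general f κ hκ hnorm hmono S hS0 hstep γ hγ0 hγ1 hratio T hT
end
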